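/- Fix n ≥ 1. Define n×n real matrices S and T by S_{ij} = (-1)^{i+j-1} / ((i-1)!·(j-1)!·(i+j-1)) and T_{ij} = -(1/(i+j-1)) · C(n+i-1, i-1) · C(n+j-1, j-1) · (n!)² / ((n-i)!·(n-j)!), for 1 ≤ i,j ≤ n. Then S · T equals the identity matrix. -/

import Mathlib

/-!
Write `σ i = (-1)^i / i!`, `τ j = C(n+j, j) n! / (n-1-j)!` and `H i j = 1 / (i+j+1)`. Then
`S = -diag σ · H · diag σ` and `T = -diag τ · H · diag τ`, so `S T = 1` reduces to
`H · diag (σ τ) · H = diag (σ τ)⁻¹`.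

`H` is the symmetric Cauchy matrix `1 / (x i + x j)` on the nodes `x t = t + 1/2`. Interpolating
`f = ∏_{t ≠ k} (X - x t)`, of degree `< n`, at the nodes `-x j` and evaluating the barycentric
formula at `x i` shows that `∑ j, c j / ((x i + x j) (x j + x k))` is a multiple of `f (x i)`, so
it vanishes unless `i = k`, where it equals `1 / c k`; here `c j` is the nodal weight of the
nodes `-x` at `-x j` times their nodal polynomial at `x j`. For the Hilbert nodes `c j = σ j τ j`.
-/

open Finset Polynomial Matrix
open scoped Nat

namespace Lagrange

variable {F ι : Type*} [Field F] {s : Finset ι}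

theorem eval_neg_nodal (v : ι → F) (a : F) :
    (nodal s v).eval (-a) = (-1) ^ #s * (nodal s (-v)).eval a := by
  simp only [eval_nodal, Pi.neg_apply, sub_neg_eq_add, ← neg_add', prod_neg]

variable [DecidableEq ι]

theorem eval_eq_eval_nodal_mul_sum {v : ι → F} {f : F[X]} (hvs : Set.InjOn v s)
    (hf : f.degree < #s) {x : F} (hx : ∀ i ∈ s, x ≠ v i) :
    f.eval x = (nodal s v).eval x * ∑ i ∈ s, nodalWeight s v i * (x - v i)⁻¹ * f.eval (v i) := by
  conv_lhs => rw [eq_interpolate hvs hf]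
  exact eval_interpolate_not_at_node _ hx

theorem sum_nodalWeight_mul_eval_nodal_div {x y : ι → F} (hy : Set.InjOn y s)
    (hxy : ∀ i ∈ s, ∀ j ∈ s, x i ≠ y j) {i k : ι} (hi : i ∈ s) (hk : k ∈ s) :
    ∑ j ∈ s, nodalWeight s y j * (nodal s x).eval (y j) / ((x i - y j) * (x k - y j)) =
      if i = k then -(nodalWeight s x k * (nodal s y).eval (x k))⁻¹ else 0 := by
  set f := nodal (s.erase k) x
  have hf : f.degree < #s := by
    rw [degree_nodal, card_erase_of_mem hk, Nat.cast_lt]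
    exact Nat.sub_lt (card_pos.mpr ⟨k, hk⟩) one_pos
  have hfy : ∀ j ∈ s, f.eval (y j) = (nodal s x).eval (y j) / (y j - x k) := fun j hj => by
    rw [nodal_eq_mul_nodal_erase hk, eval_mul, eval_sub, eval_X, eval_C,
      mul_div_cancel_left₀ _ (sub_ne_zero.mpr (hxy k hk j hj).symm)]
  have hPx : (nodal s y).eval (x i) ≠ 0 := eval_nodal_not_at_node (hxy i hi)
  have key := eval_eq_eval_nodal_mul_sum hy hf (hxy i hi)
  have hfx : f.eval (x i) = if i = k then (nodalWeight s x k)⁻¹ else 0 := by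
    split_ifs with hik
    · rw [hik, nodalWeight_eq_eval_nodal_erase_inv, inv_inv]
    · exact eval_nodal_at_node (mem_erase.mpr ⟨hik, hi⟩)
  calc ∑ j ∈ s, nodalWeight s y j * (nodal s x).eval (y j) / ((x i - y j) * (x k - y j))
      = -∑ j ∈ s, nodalWeight s y j * (x i - y j)⁻¹ * f.eval (y j) := by
        rw [← sum_neg_distrib]
        refine sum_congr rfl fun j hj => ?_
        have hkj : y j - x k ≠ 0 := sub_ne_zero.mpr (hxy k hk j hj).symm
        rw [hfy j hj, ← neg_sub (y j) (x k)]
        field_simp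
    _ = -(f.eval (x i) / (nodal s y).eval (x i)) := by rw [key, mul_div_cancel_left₀ _ hPx]
    _ = _ := by
        rw [hfx]
        split_ifs with hik
        · rw [hik, div_eq_mul_inv, mul_inv]
        · rw [zero_div, neg_zero]

theorem nodalWeight_neg (v : ι → F) (i : ι) :
    nodalWeight s (-v) i = (-1) ^ #(s.erase i) * nodalWeight s v i := by
  simp only [nodalWeight, Pi.neg_apply, neg_sub_neg, ← neg_sub (v i), inv_neg, prod_neg]

theorem sum_nodalWeight_neg_mul_div_add_mul_add {x : ι → F} (hx : Set.InjOn x s)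
    (hxx : ∀ i ∈ s, ∀ j ∈ s, x i + x j ≠ 0) {i k : ι} (hi : i ∈ s) (hk : k ∈ s) :
    ∑ j ∈ s, nodalWeight s (-x) j * (nodal s (-x)).eval (x j) / ((x i + x j) * (x j + x k)) =
      if i = k then (nodalWeight s (-x) i * (nodal s (-x)).eval (x i))⁻¹ else 0 := by
  have hneg : Set.InjOn (-x) s := fun a ha b hb h => hx ha hb (neg_inj.mp h)
  have cauchy := sum_nodalWeight_mul_eval_nodal_div (x := x) hneg
    (fun i hi j hj h => hxx i hi j hj (by simp [h])) hi hk
  simp only [Pi.neg_apply, sub_neg_eq_add, eval_neg_nodal x] at cauchy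
  set ε : F := (-1) ^ #s
  have hε : ε * ε = 1 := by rw [← pow_add, ← two_mul, pow_mul, neg_one_sq, one_pow]
  calc ∑ j ∈ s, nodalWeight s (-x) j * (nodal s (-x)).eval (x j) / ((x i + x j) * (x j + x k))
      = ε * ∑ j ∈ s, nodalWeight s (-x) j * (ε * (nodal s (-x)).eval (x j)) /
          ((x i + x j) * (x k + x j)) := by
        rw [mul_sum]
        refine sum_congr rfl fun j _ => ?_
        rw [add_comm (x k)]
        linear_combination -(nodalWeight s (-x) j * (nodal s (-x)).eval (x j) /
          ((x i + x j) * (x j + x k))) * hε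
    _ = _ := by
        rw [cauchy]
        split_ifs with hik
        · subst hik
          rw [nodalWeight_neg x, show ε = (-1) ^ (#(s.erase i) + 1) by rw [card_erase_add_one hi]]
          simp only [mul_inv, ← inv_pow, inv_neg_one]
          ring
        · rw [mul_zero]

end Lagrange

section Products

variable {R : Type*} [CommRing R]

theorem factorial_mul_prod_range_add_add_one (a n : ℕ) :
    (a ! : R) * ∏ t ∈ range n, ((a : R) + t + 1) = ((a + n)! : R) := by
  rw [← Nat.factorial_mul_ascFactorial, Nat.ascFactorial_eq_prod_range]
  push_cast
  simp only [add_right_comm]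

theorem prod_range_sub_self (j : ℕ) : ∏ t ∈ range j, ((t : R) - j) = (-1) ^ j * (j ! : R) := by
  calc ∏ t ∈ range j, ((t : R) - j) = ∏ t ∈ range j, -(((t + 1 : ℕ) : R)) := by
        rw [← prod_range_reflect]
        refine prod_congr rfl fun t ht => ?_
        rw [Nat.sub_sub, Nat.cast_sub (by rw [mem_range] at ht; omega)]
        push_cast
        ring
    _ = (-1) ^ j * (j ! : R) := by
        rw [prod_neg, card_range, ← Nat.cast_prod, prod_range_add_one_eq_factorial]

theorem prod_Ico_succ_sub (j n : ℕ) : ∏ t ∈ Ico (j + 1) n, ((t : R) - j) = ((n - 1 - j)! : R) := by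
  rw [prod_Ico_eq_prod_range, ← prod_range_add_one_eq_factorial, Nat.cast_prod,
    show n - (j + 1) = n - 1 - j by omega]
  refine prod_congr rfl fun t _ => ?_
  push_cast
  ring

theorem prod_erase_range_sub {j n : ℕ} (hj : j < n) :
    ∏ t ∈ (range n).erase j, ((t : R) - j) = (-1) ^ j * j ! * (n - 1 - j)! := by
  have hsplit : (range n).erase j = range j ∪ Ico (j + 1) n := by
    ext t; simp only [mem_erase, mem_range, mem_union, mem_Ico]; omega
  have hdisj : Disjoint (range j) (Ico (j + 1) n) := by
    simp only [disjoint_left, mem_range, mem_Ico]; omega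
  rw [hsplit, prod_union hdisj, prod_range_sub_self, prod_Ico_succ_sub]

end Products

theorem diagonal_mul_mul_diagonal_mul_diagonal_mul_mul_diagonal {ι K : Type*} [Fintype ι]
    [DecidableEq ι] [Field K] {H : Matrix ι ι K} {σ τ : ι → K} (hσ : ∀ j, σ j ≠ 0)
    (hτ : ∀ j, τ j ≠ 0)
    (hH : H * diagonal (fun j => σ j * τ j) * H = diagonal fun j => (σ j * τ j)⁻¹) :
    diagonal σ * H * diagonal σ * (diagonal τ * H * diagonal τ) = 1 := by
  calc diagonal σ * H * diagonal σ * (diagonal τ * H * diagonal τ)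
      = diagonal σ * (H * diagonal (fun j => σ j * τ j) * H) * diagonal τ := by
        rw [← diagonal_mul_diagonal]
        simp only [Matrix.mul_assoc]
    _ = 1 := by
        rw [hH, diagonal_mul_diagonal, diagonal_mul_diagonal, ← diagonal_one]
        congr 1
        ext j
        field_simp [hσ j, hτ j]

noncomputable def hilbertMatrix (n : ℕ) : Matrix (Fin n) (Fin n) ℝ :=
  of fun i j => ((i : ℝ) + j + 1)⁻¹

noncomputable def hilbertWeight (n j : ℕ) : ℝ :=
  (-1) ^ j * (n + j).choose j * n ! / (j ! * (n - 1 - j)!)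

theorem hilbertWeight_eq_nodalWeight_mul {n j : ℕ} (hj : j < n) :
    hilbertWeight n j = Lagrange.nodalWeight (range n) (-fun t : ℕ => (t : ℝ) + 2⁻¹) j *
      (Lagrange.nodal (range n) (-fun t : ℕ => (t : ℝ) + 2⁻¹)).eval ((j : ℝ) + 2⁻¹) := by
  have hweight : Lagrange.nodalWeight (range n) (-fun t : ℕ => (t : ℝ) + 2⁻¹) j =
      (∏ t ∈ (range n).erase j, ((t : ℝ) - j))⁻¹ := by
    rw [Lagrange.nodalWeight, ← prod_inv_distrib]
    refine prod_congr rfl fun t _ => ?_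
    simp only [Pi.neg_apply]
    ring
  have hnodal : (Lagrange.nodal (range n) (-fun t : ℕ => (t : ℝ) + 2⁻¹)).eval ((j : ℝ) + 2⁻¹) =
      ∏ t ∈ range n, ((j : ℝ) + t + 1) := by
    rw [Lagrange.eval_nodal]
    refine prod_congr rfl fun t _ => ?_
    simp only [Pi.neg_apply]
    ring
  have hchoose : ((n + j).choose j : ℝ) * n ! * j ! = (n + j)! := by
    exact_mod_cast Nat.add_choose_mul_factorial_mul_factorial n j
  have hprod : ∏ t ∈ range n, ((j : ℝ) + t + 1) = (n + j)! / j ! := by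
    rw [eq_div_iff (by positivity), mul_comm, factorial_mul_prod_range_add_add_one, add_comm]
  have hsign : ((-1 : ℝ) ^ j) ^ 2 = 1 := by rw [← pow_mul, pow_mul', neg_one_sq, one_pow]
  rw [hweight, hnodal, prod_erase_range_sub hj, hprod, hilbertWeight]
  field_simp
  linear_combination ((n + j).choose j * n ! * j ! : ℝ) * hsign + hchoose

theorem hilbertMatrix_mul_diagonal_mul_hilbertMatrix (n : ℕ) :
    hilbertMatrix n * diagonal (fun j : Fin n => hilbertWeight n j) * hilbertMatrix n =
      diagonal fun j : Fin n => (hilbertWeight n j)⁻¹ := by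
  set x : ℕ → ℝ := fun t => (t : ℝ) + 2⁻¹
  have hx : Set.InjOn x (range n) := fun a _ b _ h => by simpa [x] using h
  have hxx : ∀ i ∈ range n, ∀ j ∈ range n, x i + x j ≠ 0 := fun i _ j _ => by positivity
  ext i k
  have key := Lagrange.sum_nodalWeight_neg_mul_div_add_mul_add hx hxx (mem_range.2 i.2)
    (mem_range.2 k.2)
  rw [← hilbertWeight_eq_nodalWeight_mul i.2,
    sum_congr rfl fun j hj => by rw [← hilbertWeight_eq_nodalWeight_mul (mem_range.1 hj)]] at key
  simp only [Fin.val_inj] at key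
  rw [mul_apply, diagonal_apply, ← key, ← Fin.sum_univ_eq_sum_range]
  refine sum_congr rfl fun j _ => ?_
  simp only [mul_diagonal, hilbertMatrix, of_apply, x, div_eq_mul_inv, mul_inv]
  ring

theorem stmt_3_general (n : ℕ) (S T : Matrix (Fin n) (Fin n) ℝ)
    (hS : ∀ i j : Fin n, S i j =
      (-1 : ℝ) ^ (i.val + j.val + 1) /
        ((i.val.factorial : ℝ) * (j.val.factorial : ℝ) * ((i.val : ℝ) + (j.val : ℝ) + 1)))
    (hT : ∀ i j : Fin n, T i j =
      -(1 / ((i.val : ℝ) + (j.val : ℝ) + 1)) *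
        ((n + i.val).choose i.val : ℝ) * ((n + j.val).choose j.val : ℝ) *
        ((n.factorial : ℝ)) ^ 2 /
        (((n - 1 - i.val).factorial : ℝ) * ((n - 1 - j.val).factorial : ℝ))) :
    S * T = 1 := by
  set σ : Fin n → ℝ := fun j => (-1) ^ (j : ℕ) / (j : ℕ)!
  set τ : Fin n → ℝ := fun j => ((n + j).choose j : ℝ) * n ! / (n - 1 - j)!
  have hσ : ∀ j, σ j ≠ 0 := fun j => div_ne_zero (pow_ne_zero _ (by norm_num)) (by positivity)
  have hτ : ∀ j, τ j ≠ 0 := fun j => by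
    have hchoose := Nat.choose_pos (Nat.le_add_left (j : ℕ) n)
    simp only [τ]
    positivity
  have hS' : S = -(diagonal σ * hilbertMatrix n * diagonal σ) := by
    ext i j
    simp only [hS, Matrix.neg_apply, mul_diagonal, diagonal_mul, hilbertMatrix, of_apply, σ]
    field_simp
    ring
  have hT' : T = -(diagonal τ * hilbertMatrix n * diagonal τ) := by
    ext i j
    simp only [hT, Matrix.neg_apply, mul_diagonal, diagonal_mul, hilbertMatrix, of_apply, τ]
    field_simp
  have hστ : ∀ j : Fin n, σ j * τ j = hilbertWeight n j := fun j => by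
    simp only [σ, τ, hilbertWeight]
    field_simp
  rw [hS', hT', neg_mul_neg]
  refine diagonal_mul_mul_diagonal_mul_diagonal_mul_mul_diagonal hσ hτ ?_
  simp only [hστ, hilbertMatrix_mul_diagonal_mul_hilbertMatrix]

theorem stmt_3 (n : ℕ) (hn : 1 ≤ n) (S T : Matrix (Fin n) (Fin n) ℝ)
    (hS : ∀ i j : Fin n, S i j =
      (-1 : ℝ) ^ (i.val + j.val + 1) /
        ((i.val.factorial : ℝ) * (j.val.factorial : ℝ) * ((i.val : ℝ) + (j.val : ℝ) + 1)))
    (hT : ∀ i j : Fin n, T i j =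
      -(1 / ((i.val : ℝ) + (j.val : ℝ) + 1)) *
        ((n + i.val).choose i.val : ℝ) * ((n + j.val).choose j.val : ℝ) *
        ((n.factorial : ℝ)) ^ 2 /
        (((n - 1 - i.val).factorial : ℝ) * ((n - 1 - j.val).factorial : ℝ))) :
    S * T = 1 :=
  stmt_3_general n S T hS hT
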